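/- Let 𝒜 be a p-S-ring over a finite p-group H, let T be a basic set, and let L ≤ H be a normal 𝒜-subgroup of order p with L not contained in rad(T). Then for every h ∈ T one has hL ∩ T = Lh ∩ T = {h}. -/

import Mathlib

open scoped Classical Pointwise

noncomputable section

variable {H : Type*}

/-- The simple quantity of a subset `T` of `H` in the group algebra `ℚ H`. -/
def simpleQ [Group H] [Fintype H] (T : Set H) : MonoidAlgebra ℚ H :=
  ∑ h ∈ T.toFinset, MonoidAlgebra.single h (1 : ℚ)

/-- An S-ring over a finite group `H`: a partition of `H` containing `{1}`,
closed under inversion, whose simple quantities span a subalgebra of `ℚ H`. -/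
structure SRing (H : Type*) [Group H] [Fintype H] where
  basicSets : Set (Set H)
  exists_unique_mem : ∀ h : H, ∃! T, T ∈ basicSets ∧ h ∈ T
  nonempty_of_mem : ∀ T ∈ basicSets, T.Nonempty
  one_mem : ({1} : Set H) ∈ basicSets
  inv_mem : ∀ T ∈ basicSets, T⁻¹ ∈ basicSets
  mul_mem : ∀ T ∈ basicSets, ∀ S ∈ basicSets,
    simpleQ T * simpleQ S ∈ Submodule.span ℚ (simpleQ '' basicSets)

namespace SRing

variable [Group H] [Fintype H]

/-- The underlying ℚ-subspace of the S-ring. -/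
def carrier (A : SRing H) : Submodule ℚ (MonoidAlgebra ℚ H) :=
  Submodule.span ℚ (simpleQ '' A.basicSets)

/-- `S` is an `𝒜`-subset: its simple quantity lies in `𝒜`. -/
def IsSubset (A : SRing H) (S : Set H) : Prop := simpleQ S ∈ A.carrier

/-- The thin radical of the S-ring. -/
def thin (A : SRing H) : Set H := {g | ({g} : Set H) ∈ A.basicSets}

end SRing

/-- The radical of a subset `S`: elements `h` with `hS = Sh = S`. -/
def radSet [Group H] (S : Set H) : Set H := {h | {h} * S = S ∧ S * {h} = S}

/-- The automorphism group of the Cayley digraph `Cay(H, T)`. -/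
def cayAut [Group H] (T : Set H) : Subgroup (Equiv.Perm H) where
  carrier := {g | ∀ x y : H, y * x⁻¹ ∈ T ↔ g y * (g x)⁻¹ ∈ T}
  one_mem' := by intro x y; simp
  mul_mem' := by
    intro a b ha hb x y
    simpa [Equiv.Perm.mul_apply] using (hb x y).trans (ha (b x) (b y))
  inv_mem' := by
    intro a ha x y
    simpa using (ha (a⁻¹ x) (a⁻¹ y)).symm

/-- The automorphism group of an S-ring. -/
def SRing.aut [Group H] [Fintype H] (A : SRing H) : Subgroup (Equiv.Perm H) :=
  ⨅ T ∈ A.basicSets, cayAut T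

/-- The right regular representation of `H` inside `Sym(H)`. -/
def rightRegular (H : Type*) [Group H] : Subgroup (Equiv.Perm H) where
  carrier := Set.range fun h : H => Equiv.mulRight h
  one_mem' := ⟨1, by ext x; simp⟩
  mul_mem' := by
    rintro _ _ ⟨a, rfl⟩ ⟨b, rfl⟩
    exact ⟨b * a, by ext x; simp [mul_assoc]⟩
  inv_mem' := by
    rintro _ ⟨a, rfl⟩
    exact ⟨a⁻¹, by ext x; simp⟩

/-- The orbit of `h` under the stabilizer of the identity in `G ≤ Sym(H)`. -/
def orbitOfStab [Group H] (G : Subgroup (Equiv.Perm H)) (h : H) : Set H :=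
  {x | ∃ g ∈ G, g 1 = 1 ∧ g h = x}

/-- A Schurian S-ring: its basic sets are the orbits of the identity-stabilizer
of some overgroup of the right regular representation. -/
def SRing.IsSchurian [Group H] [Fintype H] (A : SRing H) : Prop :=
  ∃ G : Subgroup (Equiv.Perm H), rightRegular H ≤ G ∧
    A.basicSets = {S | ∃ h : H, S = orbitOfStab G h}

/-- A p-S-ring: all basic sets have `p`-power size. -/
def SRing.IsPSRing [Group H] [Fintype H] (A : SRing H) (p : ℕ) : Prop :=
  ∀ T ∈ A.basicSets, ∃ k : ℕ, Nat.card T = p ^ k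

/-- A decomposable S-ring: a nontrivial `E/F`-wreath product. -/
def SRing.Decomposable [Group H] [Fintype H] (A : SRing H) : Prop :=
  ∃ E F : Subgroup H, F.Normal ∧ F ≤ E ∧ E ≠ ⊤ ∧ F ≠ ⊥ ∧
    A.IsSubset ↑E ∧ A.IsSubset ↑F ∧
    ∀ T ∈ A.basicSets, T ⊆ ((E : Set H))ᶜ → (F : Set H) ⊆ radSet T

/-- The 2-closure of a permutation group `G ≤ Sym(Ω)`: all permutations
preserving every `G`-orbit on `Ω × Ω`. -/
def twoClosure {Ω : Type*} (G : Subgroup (Equiv.Perm Ω)) : Subgroup (Equiv.Perm Ω) where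
  carrier := {γ | ∀ a b : Ω, ∃ g ∈ G, g a = γ a ∧ g b = γ b}
  one_mem' := fun a b => ⟨1, G.one_mem, rfl, rfl⟩
  mul_mem' := by
    intro γ δ hγ hδ a b
    obtain ⟨g, hg, hga, hgb⟩ := hδ a b
    obtain ⟨g', hg', hg'a, hg'b⟩ := hγ (δ a) (δ b)
    exact ⟨g' * g, G.mul_mem hg' hg, by simp [Equiv.Perm.mul_apply, hga, hg'a],
      by simp [Equiv.Perm.mul_apply, hgb, hg'b]⟩
  inv_mem' := by
    intro γ hγ a b
    obtain ⟨g, hg, hga, hgb⟩ := hγ (γ⁻¹ a) (γ⁻¹ b)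
    have h1 : g (γ⁻¹ a) = a := by rw [hga]; simp
    have h2 : g (γ⁻¹ b) = b := by rw [hgb]; simp
    refine ⟨g⁻¹, G.inv_mem hg, ?_, ?_⟩
    · exact g.injective (by rw [h1]; simp)
    · exact g.injective (by rw [h2]; simp)

/-!
The coefficient of `x` in `simpleQ T * simpleQ L` is `|T ∩ xL|`, so this number is a constant `n`
on the basic set `T`. The sets `T ∩ tL` partition `T`, hence `n` divides `|T|`, a power of `p`,
while `n ≤ |L| = p`; so `n = 1` or `n = p`. If `n = p`, then `tL ⊆ T` for every `t ∈ T`, and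
normality of `L` puts `L` inside `rad T`. Hence `n = 1`, i.e. `hL ∩ T = {h}`, and `Lh = hL`.
-/

lemma Nat.eq_one_or_self_of_dvd_prime_pow_of_le {p n k : ℕ} (hp : p.Prime) (hdvd : n ∣ p ^ k)
    (hle : n ≤ p) : n = 1 ∨ n = p := by
  obtain ⟨j, -, rfl⟩ := (Nat.dvd_prime_pow hp).mp hdvd
  have : j ≤ 1 := by
    by_contra! hj
    exact absurd (Nat.pow_lt_pow_right hp.one_lt hj) (by simpa using hle.not_gt)
  interval_cases j <;> simp

section Cosets

variable {G : Type*} [Group G]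

lemma ncard_inter_leftCoset_dvd_ncard (L : Subgroup G) {T : Set G} (hT : T.Finite) {n : ℕ}
    (hn : ∀ t ∈ T, (T ∩ t • (L : Set G)).ncard = n) : n ∣ T.ncard := by
  classical
  rw [Set.ncard_eq_toFinset_card T hT, Finset.card_eq_sum_card_fiberwise
    (f := ((↑) : G → G ⧸ L)) (fun t ht => Finset.mem_image_of_mem _ ht)]
  refine Finset.dvd_sum fun q hq => ?_
  obtain ⟨t, ht, rfl⟩ := Finset.mem_image.mp hq
  refine dvd_of_eq ?_
  rw [← hn t (hT.mem_toFinset.mp ht), ← Set.ncard_coe_finset]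
  congr 1
  ext x
  simp [QuotientGroup.eq, mem_leftCoset_iff, ← inv_mem_iff (x := t⁻¹ * x)]

lemma ncard_inter_leftCoset_le (L : Subgroup G) [Finite L] (T : Set G) (t : G) :
    (T ∩ t • (L : Set G)).ncard ≤ Nat.card L := by
  calc (T ∩ t • (L : Set G)).ncard
      ≤ (t • (L : Set G)).ncard := Set.ncard_le_ncard Set.inter_subset_right
        (Set.toFinite (L : Set G)).smul_set
    _ = Nat.card L := by rw [Set.ncard_smul_set]; exact (Nat.card_coe_set_eq _).symm

lemma leftCoset_subset_of_ncard_inter_eq {L : Subgroup G} [Finite L] {T : Set G} {t : G}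
    (h : (T ∩ t • (L : Set G)).ncard = Nat.card L) : t • (L : Set G) ⊆ T := by
  have hfin : (t • (L : Set G)).Finite := (Set.toFinite (L : Set G)).smul_set
  have heq := Set.eq_of_subset_of_ncard_le Set.inter_subset_right
    (by rw [h, Set.ncard_smul_set]; exact (Nat.card_coe_set_eq _).ge) hfin
  exact heq ▸ Set.inter_subset_left

lemma subset_radSet_of_forall_mul_mem (L : Subgroup G) {T : Set G}
    (h : ∀ l ∈ L, ∀ t ∈ T, l * t ∈ T ∧ t * l ∈ T) : (L : Set G) ⊆ radSet T := by
  intro l hl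
  show {l} * T = T ∧ T * {l} = T
  rw [Set.singleton_mul, Set.mul_singleton]
  refine ⟨Set.Subset.antisymm ?_ fun x hx => ?_, Set.Subset.antisymm ?_ fun x hx => ?_⟩
  · rintro _ ⟨t, ht, rfl⟩
    exact (h l hl t ht).1
  · exact ⟨l⁻¹ * x, (h l⁻¹ (L.inv_mem hl) x hx).1, mul_inv_cancel_left l x⟩
  · rintro _ ⟨t, ht, rfl⟩
    exact (h l hl t ht).2
  · exact ⟨x * l⁻¹, (h l⁻¹ (L.inv_mem hl) x hx).2, inv_mul_cancel_right x l⟩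

lemma Subgroup.Normal.subset_radSet {L : Subgroup G} (hL : L.Normal) {T : Set G}
    (h : ∀ t ∈ T, t • (L : Set G) ⊆ T) : (L : Set G) ⊆ radSet T := by
  refine subset_radSet_of_forall_mul_mem L fun l hl t ht => ⟨?_, h t ht ⟨l, hl, rfl⟩⟩
  have hconj : l * t = t * (t⁻¹ * l * t) := by group
  exact hconj ▸ h t ht ⟨_, hL.conj_mem' l hl t, rfl⟩

end Cosets

section SimpleQuantity

variable [Group H] [Fintype H]

lemma coeff_simpleQ (S : Set H) (x : H) :
    (simpleQ S).coeff x = if x ∈ S then 1 else 0 := by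
  simp [simpleQ, MonoidAlgebra.coeff_sum, Finsupp.finsetSum_apply, MonoidAlgebra.coeff_single,
    Finsupp.single_apply]

lemma coeff_simpleQ_mul_simpleQ (T S : Set H) (x : H) :
    (simpleQ T * simpleQ S).coeff x = (T ∩ x • S⁻¹).ncard := by
  have hsingle (t s : H) : (MonoidAlgebra.single (t * s) (1 : ℚ)).coeff x =
      if s = t⁻¹ * x then 1 else 0 := by
    simp [MonoidAlgebra.coeff_single, Finsupp.single_apply, eq_inv_mul_iff_mul_eq]
  have hfilter : (T ∩ x • S⁻¹) = ↑(T.toFinset.filter fun t => t⁻¹ * x ∈ S) := by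
    ext t
    simp [mem_leftCoset_iff]
  simp only [simpleQ, Finset.sum_mul_sum, MonoidAlgebra.single_mul_single, mul_one,
    MonoidAlgebra.coeff_sum, Finsupp.finsetSum_apply, hsingle, Finset.sum_ite_eq',
    Set.mem_toFinset]
  rw [hfilter, Set.ncard_coe_finset, Finset.sum_boole]

namespace SRing

variable (A : SRing H)

lemma eq_of_mem_basicSets {S T : Set H} (hS : S ∈ A.basicSets) (hT : T ∈ A.basicSets) {x : H}
    (hxS : x ∈ S) (hxT : x ∈ T) : S = T :=
  (A.exists_unique_mem x).unique ⟨hS, hxS⟩ ⟨hT, hxT⟩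

lemma coeff_eq_of_mem_carrier {a : MonoidAlgebra ℚ H} (ha : a ∈ A.carrier)
    {T : Set H} (hT : T ∈ A.basicSets) {x y : H} (hx : x ∈ T) (hy : y ∈ T) :
    a.coeff x = a.coeff y := by
  induction ha using Submodule.span_induction with
  | mem _ hS =>
    obtain ⟨S, hS, rfl⟩ := hS
    have hxy : x ∈ S ↔ y ∈ S :=
      ⟨fun hxS => A.eq_of_mem_basicSets hT hS hx hxS ▸ hy,
        fun hyS => A.eq_of_mem_basicSets hT hS hy hyS ▸ hx⟩
    simp only [coeff_simpleQ, hxy]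
  | zero => simp
  | add u v _ _ hu hv => simp [hu, hv]
  | smul c u _ hu => simp [hu]

lemma simpleQ_mul_mem_carrier {T : Set H} (hT : T ∈ A.basicSets)
    {a : MonoidAlgebra ℚ H} (ha : a ∈ A.carrier) : simpleQ T * a ∈ A.carrier := by
  induction ha using Submodule.span_induction with
  | mem _ hS =>
    obtain ⟨S, hS, rfl⟩ := hS
    exact A.mul_mem T hT S hS
  | zero => simp
  | add u v _ _ hu hv => simpa [mul_add] using A.carrier.add_mem hu hv
  | smul c u _ hu => simpa [mul_smul_comm] using A.carrier.smul_mem c hu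

lemma ncard_inter_smul_inv_eq {T S U : Set H} (hT : T ∈ A.basicSets) (hS : A.IsSubset S)
    (hU : U ∈ A.basicSets) {x y : H} (hx : x ∈ U) (hy : y ∈ U) :
    (T ∩ x • S⁻¹).ncard = (T ∩ y • S⁻¹).ncard := by
  have := A.coeff_eq_of_mem_carrier (A.simpleQ_mul_mem_carrier hT hS) hU hx hy
  rwa [coeff_simpleQ_mul_simpleQ, coeff_simpleQ_mul_simpleQ, Nat.cast_inj] at this

end SRing

end SimpleQuantity

theorem stmt10_general {H : Type*} [Group H] [Fintype H] {p : ℕ} (hp : p.Prime)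
    (A : SRing H) (hA : A.IsPSRing p)
    (T : Set H) (hT : T ∈ A.basicSets)
    (L : Subgroup H) (hLn : L.Normal) (hL : A.IsSubset ↑L)
    (hLcard : Nat.card L = p) (hrad : ¬ (L : Set H) ⊆ radSet T)
    (h : H) (hh : h ∈ T) :
    ((fun l => h * l) '' (L : Set H)) ∩ T = {h} ∧
    ((fun l => l * h) '' (L : Set H)) ∩ T = {h} := by
  set n := (T ∩ h • (L : Set H)).ncard
  have hconst (t : H) (ht : t ∈ T) : (T ∩ t • (L : Set H)).ncard = n := by
    simpa only [inv_coe_set] using A.ncard_inter_smul_inv_eq hT hL hT ht hh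
  obtain ⟨k, hk⟩ := hA T hT
  have hdvd : n ∣ p ^ k := by
    rw [← hk, Nat.card_coe_set_eq]
    exact ncard_inter_leftCoset_dvd_ncard L T.toFinite hconst
  rcases Nat.eq_one_or_self_of_dvd_prime_pow_of_le hp hdvd
    (hLcard ▸ ncard_inter_leftCoset_le L T h) with hn | hn
  · obtain ⟨a, ha⟩ := Set.ncard_eq_one.mp hn
    have hmem : h ∈ T ∩ h • (L : Set H) := ⟨hh, 1, L.one_mem, mul_one h⟩
    rw [ha, Set.mem_singleton_iff] at hmem
    subst hmem
    rw [Set.inter_comm] at ha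
    refine ⟨ha, ?_⟩
    change MulOpposite.op h • (L : Set H) ∩ T = {h}
    rwa [← eq_cosets_of_normal _ hLn h]
  · exact absurd (hLn.subset_radSet fun t ht =>
      leftCoset_subset_of_ncard_inter_eq (by rw [hconst t ht, hn, hLcard])) hrad

/-- a normal 𝒜-subgroup of order p not inside `rad T` meets each
translate of a point of `T` only in that point. -/
theorem stmt10 {H : Type*} [Group H] [Fintype H] {p : ℕ} (hp : p.Prime)
    (hpH : IsPGroup p H) (A : SRing H) (hA : A.IsPSRing p)
    (T : Set H) (hT : T ∈ A.basicSets)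
    (L : Subgroup H) (hLn : L.Normal) (hL : A.IsSubset ↑L)
    (hLcard : Nat.card L = p) (hrad : ¬ (L : Set H) ⊆ radSet T)
    (h : H) (hh : h ∈ T) :
    ((fun l => h * l) '' (L : Set H)) ∩ T = {h} ∧
    ((fun l => l * h) '' (L : Set H)) ∩ T = {h} :=
  stmt10_general hp A hA T hT L hLn hL hLcard hrad h hh
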